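/- For any n ≥ 1, consecutive sequences in the list of all restricted growth functions R_n ordered by the co-Reflected Gray Code Order differ in at most 3 adjacent positions. -/
import Mathlib


/-- `s` (0-indexed) is a restricted growth function of length `n`:
`s 0 = 0` and each next entry is at most the max of previous entries plus 1. -/
def IsRGF (n : ℕ) (s : ℕ → ℕ) : Prop :=
  s 0 = 0 ∧ ∀ i, i + 1 < n → s (i + 1) ≤ (Finset.range (i + 1)).sup s + 1

/-- membership in `R_n(b)`: restricted growth function bounded by `b`. -/
def InRnb (n b : ℕ) (s : ℕ → ℕ) : Prop :=
  IsRGF n s ∧ ∀ i < n, s i ≤ b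

/-- membership in `R*_n(b)`: restricted growth function with maximum exactly `b`. -/
def InRnbStar (n b : ℕ) (s : ℕ → ℕ) : Prop :=
  IsRGF n s ∧ (∀ i < n, s i ≤ b) ∧ ∃ i < n, s i = b

/-- Reflected Gray Code Order on length-`n` sequences. -/
def rgcLt (n : ℕ) (s t : ℕ → ℕ) : Prop :=
  ∃ k < n, (∀ i < k, s i = t i) ∧
    ((Even (∑ i ∈ Finset.range k, s i) ∧ s k < t k) ∨
     (Odd (∑ i ∈ Finset.range k, s i) ∧ t k < s k))

/-- `U_k`: number of indices `i < k` with `s i` nonzero and even. -/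
def Uval (s : ℕ → ℕ) (k : ℕ) : ℕ :=
  ((Finset.range k).filter (fun i => s i ≠ 0 ∧ Even (s i))).card

/-- co-Reflected Gray Code Order on length-`n` sequences. -/
def coRgcLt (n : ℕ) (s t : ℕ → ℕ) : Prop :=
  ∃ k < n, (∀ i < k, s i = t i) ∧
    ((Even (Uval s k) ∧ s k < t k) ∨ (Odd (Uval s k) ∧ t k < s k))

lemma Uval_congr (s t : ℕ → ℕ) (k : ℕ) (h : ∀ i < k, s i = t i) :
    Uval s k = Uval t k := by
  unfold Uval
  congr 1
  apply Finset.filter_congr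
  intro i hi
  rw [h i (Finset.mem_range.mp hi)]

lemma Uval_succ (s : ℕ → ℕ) (p : ℕ) :
    Uval s (p + 1) = Uval s p + (if s p ≠ 0 ∧ Even (s p) then 1 else 0) := by
  unfold Uval
  rw [Finset.range_add_one, Finset.filter_insert]
  by_cases h : s p ≠ 0 ∧ Even (s p)
  · rw [if_pos h, if_pos h, Finset.card_insert_of_notMem (by simp)]
  · rw [if_neg h, if_neg h, add_zero]

lemma sup_range_congr (s t : ℕ → ℕ) (k : ℕ) (h : ∀ i < k, s i = t i) :
    (Finset.range k).sup s = (Finset.range k).sup t := by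
  apply Finset.sup_congr rfl
  intro i hi
  exact h i (Finset.mem_range.mp hi)

lemma sup_range_succ' (s : ℕ → ℕ) (p : ℕ) :
    (Finset.range (p + 1)).sup s = max (s p) ((Finset.range p).sup s) := by
  rw [Finset.range_add_one, Finset.sup_insert]

lemma rgf_patch (n p : ℕ) (s : ℕ → ℕ) (hs : IsRGF n s) (hp : 0 < p)
    (c : ℕ) (hc : c ≤ (Finset.range p).sup s + 1) :
    IsRGF n (fun i => if i < p then s i else if i = p then c else 0) := by
  constructor
  · simp only [hp, if_pos]
    exact hs.1
  · intro i hin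
    by_cases h1 : i + 1 < p
    · simp only [h1, if_pos]
      have : (Finset.range (i+1)).sup (fun j => if j < p then s j else if j = p then c else 0)
          = (Finset.range (i+1)).sup s := by
        apply Finset.sup_congr rfl
        intro j hj
        have : j < p := lt_trans (Finset.mem_range.mp hj) h1
        simp [this]
      rw [this]
      exact hs.2 i hin
    · by_cases h2 : i + 1 = p
      · simp only [h2, if_neg (lt_irrefl p), if_pos rfl]
        have hps : ((Finset.range p).sup fun j => if j < p then s j else if j = p then c else 0)
            = (Finset.range p).sup s := by
          apply Finset.sup_congr rfl
          intro j hj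
          simp [Finset.mem_range.mp hj]
        rw [hps]
        exact hc
      · simp only [h1, if_neg, h2, if_neg]
        exact Nat.zero_le _

lemma sideA (n : ℕ) (s t : ℕ → ℕ) (hs : IsRGF n s)
    (k : ℕ) (hk : k < n) (hpre : ∀ i < k, s i = t i)
    (hcase : (Even (Uval s k) ∧ s k < t k) ∨ (Odd (Uval s k) ∧ t k < s k))
    (hcons : ¬ ∃ u, IsRGF n u ∧ coRgcLt n s u ∧ coRgcLt n u t)
    (p : ℕ) (hkp : k < p) (hpn : p < n) :
    (Even (Uval s p) → s p = (Finset.range p).sup s + 1) ∧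
    (Odd (Uval s p) → s p = 0) := by
  have hp0 : 0 < p := Nat.lt_of_le_of_lt (Nat.zero_le k) hkp
  have key : ∀ c, c ≤ (Finset.range p).sup s + 1 →
      ((Even (Uval s p) ∧ s p < c) ∨ (Odd (Uval s p) ∧ c < s p)) → False := by
    intro c hc hcond
    apply hcons
    set u : ℕ → ℕ := fun i => if i < p then s i else if i = p then c else 0 with hu
    have hus : ∀ i < p, u i = s i := by intro i hi; simp [hu, hi]
    refine ⟨u, rgf_patch n p s hs hp0 c hc, ⟨p, hpn, ?_, ?_⟩, ⟨k, hk, ?_, ?_⟩⟩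
    · intro i hi; exact (hus i hi).symm
    · have hup : u p = c := by simp [hu]
      rw [hup]; exact hcond
    · intro i hi
      rw [hus i (lt_trans hi hkp)]
      exact hpre i hi
    · have huk : u k = s k := hus k hkp
      have hUu : Uval u k = Uval s k := Uval_congr u s k (fun i hi => hus i (lt_trans hi hkp))
      rw [huk, hUu]
      exact hcase
  constructor
  · intro hev
    by_contra hne
    have hle : s p ≤ (Finset.range p).sup s + 1 := by
      obtain ⟨q, rfl⟩ : ∃ q, p = q + 1 := ⟨p - 1, (Nat.succ_pred_eq_of_pos hp0).symm⟩
      exact hs.2 q hpn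
    have : s p + 1 ≤ (Finset.range p).sup s + 1 := by omega
    exact key (s p + 1) this (Or.inl ⟨hev, Nat.lt_succ_self _⟩)
  · intro hodd
    by_contra hne
    exact key 0 (Nat.zero_le _) (Or.inr ⟨hodd, Nat.pos_of_ne_zero hne⟩)

lemma sideB (n : ℕ) (s t : ℕ → ℕ) (ht : IsRGF n t)
    (k : ℕ) (hk : k < n) (hpre : ∀ i < k, s i = t i)
    (hcase : (Even (Uval s k) ∧ s k < t k) ∨ (Odd (Uval s k) ∧ t k < s k))
    (hcons : ¬ ∃ u, IsRGF n u ∧ coRgcLt n s u ∧ coRgcLt n u t)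
    (p : ℕ) (hkp : k < p) (hpn : p < n) :
    (Even (Uval t p) → t p = 0) ∧
    (Odd (Uval t p) → t p = (Finset.range p).sup t + 1) := by
  have hp0 : 0 < p := Nat.lt_of_le_of_lt (Nat.zero_le k) hkp
  have key : ∀ c, c ≤ (Finset.range p).sup t + 1 →
      ((Even (Uval t p) ∧ c < t p) ∨ (Odd (Uval t p) ∧ t p < c)) → False := by
    intro c hc hcond
    apply hcons
    set u : ℕ → ℕ := fun i => if i < p then t i else if i = p then c else 0 with hu
    have hut : ∀ i < p, u i = t i := by intro i hi; simp [hu, hi]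
    refine ⟨u, rgf_patch n p t ht hp0 c hc, ⟨k, hk, ?_, ?_⟩, ⟨p, hpn, ?_, ?_⟩⟩
    · intro i hi
      rw [hut i (lt_trans hi hkp)]
      exact hpre i hi
    · rw [hut k hkp]
      exact hcase
    · intro i hi; exact hut i hi
    · have hup : u p = c := by simp [hu]
      have hUu : Uval u p = Uval t p := Uval_congr u t p hut
      rw [hup, hUu]
      exact hcond
  constructor
  · intro hev
    by_contra hne
    exact key 0 (Nat.zero_le _) (Or.inl ⟨hev, Nat.pos_of_ne_zero hne⟩)
  · intro hodd
    by_contra hne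
    have hle : t p ≤ (Finset.range p).sup t + 1 := by
      obtain ⟨q, rfl⟩ : ∃ q, p = q + 1 := ⟨p - 1, (Nat.succ_pred_eq_of_pos hp0).symm⟩
      exact ht.2 q hpn
    have : t p + 1 ≤ (Finset.range p).sup t + 1 := by omega
    exact key (t p + 1) this (Or.inr ⟨hodd, Nat.lt_succ_self _⟩)

lemma Uval_succ_zero (s : ℕ → ℕ) (p : ℕ) (h : s p = 0) : Uval s (p+1) = Uval s p := by
  rw [Uval_succ]; simp [h]

lemma Uval_succ_odd (s : ℕ → ℕ) (p : ℕ) (h : Odd (s p)) : Uval s (p+1) = Uval s p := by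
  rw [Uval_succ]
  have : ¬ (s p ≠ 0 ∧ Even (s p)) := by
    rintro ⟨-, he⟩; exact (Nat.not_even_iff_odd.mpr h) he
  simp [this]

lemma Uval_succ_even_pos (s : ℕ → ℕ) (p : ℕ) (h0 : s p ≠ 0) (he : Even (s p)) :
    Uval s (p+1) = Uval s p + 1 := by
  rw [Uval_succ]; simp [h0, he]

lemma tailS (n k : ℕ) (s : ℕ → ℕ)
    (A : ∀ p, k < p → p < n →
      (Even (Uval s p) → s p = (Finset.range p).sup s + 1) ∧
      (Odd (Uval s p) → s p = 0)) :
    ∀ q, k + 3 ≤ q → q < n → s q = 0 := by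
  have main : ∀ q, k + 3 ≤ q → q < n → Odd (Uval s q) ∧ s q = 0 := by
    intro q hq
    induction q, hq using Nat.le_induction with
    | base =>
      intro hqn
      have h1n : k + 1 < n := by omega
      have h2n : k + 2 < n := by omega
      have A1 := A (k+1) (by omega) h1n
      have A2 := A (k+2) (by omega) h2n
      have A3 := A (k+3) (by omega) hqn
      rcases Nat.even_or_odd (Uval s (k+1)) with h1 | h1
      · -- s (k+1) is a new max
        have hs1 : s (k+1) = (Finset.range (k+1)).sup s + 1 := A1.1 h1
        have hs1ne : s (k+1) ≠ 0 := by rw [hs1]; exact Nat.succ_ne_zero _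
        rcases Nat.even_or_odd (s (k+1)) with he | ho
        · have hU2 : Uval s (k+2) = Uval s (k+1) + 1 := Uval_succ_even_pos s (k+1) hs1ne he
          have h2 : Odd (Uval s (k+2)) := by rw [hU2]; exact Even.add_one h1
          have hz2 : s (k+2) = 0 := A2.2 h2
          have hU3 : Uval s (k+3) = Uval s (k+2) := Uval_succ_zero s (k+2) hz2
          have h3 : Odd (Uval s (k+3)) := hU3 ▸ h2
          exact ⟨h3, A3.2 h3⟩
        · have hU2 : Uval s (k+2) = Uval s (k+1) := Uval_succ_odd s (k+1) ho
          have h2 : Even (Uval s (k+2)) := hU2 ▸ h1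
          have hs2 : s (k+2) = (Finset.range (k+2)).sup s + 1 := A2.1 h2
          have hsup : (Finset.range (k+2)).sup s = s (k+1) := by
            rw [sup_range_succ']
            rw [hs1]
            omega
          have hs2' : s (k+2) = s (k+1) + 1 := by rw [hs2, hsup]
          have he2 : Even (s (k+2)) := by rw [hs2']; exact Odd.add_one ho
          have hne2 : s (k+2) ≠ 0 := by rw [hs2']; exact Nat.succ_ne_zero _
          have hU3 : Uval s (k+3) = Uval s (k+2) + 1 := Uval_succ_even_pos s (k+2) hne2 he2
          have h3 : Odd (Uval s (k+3)) := by rw [hU3]; exact Even.add_one h2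
          exact ⟨h3, A3.2 h3⟩
      · have hz1 : s (k+1) = 0 := A1.2 h1
        have hU2 : Uval s (k+2) = Uval s (k+1) := Uval_succ_zero s (k+1) hz1
        have h2 : Odd (Uval s (k+2)) := hU2 ▸ h1
        have hz2 : s (k+2) = 0 := A2.2 h2
        have hU3 : Uval s (k+3) = Uval s (k+2) := Uval_succ_zero s (k+2) hz2
        have h3 : Odd (Uval s (k+3)) := hU3 ▸ h2
        exact ⟨h3, A3.2 h3⟩
    | succ q hq IH =>
      intro hq1n
      obtain ⟨ho, hz⟩ := IH (by omega)
      have hU : Uval s (q+1) = Uval s q := Uval_succ_zero s q hz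
      have ho' : Odd (Uval s (q+1)) := hU ▸ ho
      exact ⟨ho', (A (q+1) (by omega) hq1n).2 ho'⟩
  exact fun q hq hqn => (main q hq hqn).2

lemma tailT (n k : ℕ) (t : ℕ → ℕ)
    (B : ∀ p, k < p → p < n →
      (Even (Uval t p) → t p = 0) ∧
      (Odd (Uval t p) → t p = (Finset.range p).sup t + 1)) :
    ∀ q, k + 3 ≤ q → q < n → t q = 0 := by
  have main : ∀ q, k + 3 ≤ q → q < n → Even (Uval t q) ∧ t q = 0 := by
    intro q hq
    induction q, hq using Nat.le_induction with
    | base =>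
      intro hqn
      have h1n : k + 1 < n := by omega
      have h2n : k + 2 < n := by omega
      have B1 := B (k+1) (by omega) h1n
      have B2 := B (k+2) (by omega) h2n
      have B3 := B (k+3) (by omega) hqn
      rcases Nat.even_or_odd (Uval t (k+1)) with h1 | h1
      · have hz1 : t (k+1) = 0 := B1.1 h1
        have hU2 : Uval t (k+2) = Uval t (k+1) := Uval_succ_zero t (k+1) hz1
        have h2 : Even (Uval t (k+2)) := hU2 ▸ h1
        have hz2 : t (k+2) = 0 := B2.1 h2
        have hU3 : Uval t (k+3) = Uval t (k+2) := Uval_succ_zero t (k+2) hz2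
        have h3 : Even (Uval t (k+3)) := hU3 ▸ h2
        exact ⟨h3, B3.1 h3⟩
      · have hs1 : t (k+1) = (Finset.range (k+1)).sup t + 1 := B1.2 h1
        have hs1ne : t (k+1) ≠ 0 := by rw [hs1]; exact Nat.succ_ne_zero _
        rcases Nat.even_or_odd (t (k+1)) with he | ho
        · have hU2 : Uval t (k+2) = Uval t (k+1) + 1 := Uval_succ_even_pos t (k+1) hs1ne he
          have h2 : Even (Uval t (k+2)) := by rw [hU2]; exact Odd.add_one h1
          have hz2 : t (k+2) = 0 := B2.1 h2
          have hU3 : Uval t (k+3) = Uval t (k+2) := Uval_succ_zero t (k+2) hz2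
          have h3 : Even (Uval t (k+3)) := hU3 ▸ h2
          exact ⟨h3, B3.1 h3⟩
        · have hU2 : Uval t (k+2) = Uval t (k+1) := Uval_succ_odd t (k+1) ho
          have h2 : Odd (Uval t (k+2)) := hU2 ▸ h1
          have hs2 : t (k+2) = (Finset.range (k+2)).sup t + 1 := B2.2 h2
          have hsup : (Finset.range (k+2)).sup t = t (k+1) := by
            rw [sup_range_succ']
            rw [hs1]
            omega
          have hs2' : t (k+2) = t (k+1) + 1 := by rw [hs2, hsup]
          have he2 : Even (t (k+2)) := by rw [hs2']; exact Odd.add_one ho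
          have hne2 : t (k+2) ≠ 0 := by rw [hs2']; exact Nat.succ_ne_zero _
          have hU3 : Uval t (k+3) = Uval t (k+2) + 1 := Uval_succ_even_pos t (k+2) hne2 he2
          have h3 : Even (Uval t (k+3)) := by rw [hU3]; exact Odd.add_one h2
          exact ⟨h3, B3.1 h3⟩
    | succ q hq IH =>
      intro hq1n
      obtain ⟨he, hz⟩ := IH (by omega)
      have hU : Uval t (q+1) = Uval t q := Uval_succ_zero t q hz
      have he' : Even (Uval t (q+1)) := hU ▸ he
      exact ⟨he', (B (q+1) (by omega) hq1n).1 he'⟩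
  exact fun q hq hqn => (main q hq hqn).2

/-- consecutive elements of `R_n` in `⋖` order differ in at most
3 adjacent positions. -/
theorem stmt10 (n : ℕ) (hn : 1 ≤ n)
    (s t : ℕ → ℕ) (hs : IsRGF n s) (ht : IsRGF n t)
    (hst : coRgcLt n s t)
    (hcons : ¬ ∃ u, IsRGF n u ∧ coRgcLt n s u ∧ coRgcLt n u t) :
    ∃ k, ∀ i < n, s i ≠ t i → k ≤ i ∧ i < k + 3 := by
  obtain ⟨k, hk, hpre, hcase⟩ := hst
  refine ⟨k, fun i hi hne => ?_⟩
  have hA := fun p hkp hpn => sideA n s t hs k hk hpre hcase hcons p hkp hpn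
  have hB := fun p hkp hpn => sideB n s t ht k hk hpre hcase hcons p hkp hpn
  constructor
  · by_contra h
    exact hne (hpre i (by omega))
  · by_contra h
    have hs0 : s i = 0 := tailS n k s hA i (by omega) hi
    have ht0 : t i = 0 := tailT n k t hB i (by omega) hi
    exact hne (hs0.trans ht0.symm)
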